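/- arXiv:2409.19981 — 2 statements merged into one kernel-verified Lean document; each statement's English description precedes it below -/
import Mathlib

section
/- Let Ω ⊆ ℂⁿ be open and let φ : Ω → ℝ be continuous. The following are equivalent: (i) −φ is plurisubharmonic on Ω; (ii) for every open U ⊆ Ω and every holomorphic s : U → ℂ, the function z ↦ ‖s(z)‖² · exp(−φ(z)) is plurisubharmonic on U; (iii) for every open U ⊆ Ω and every nowhere-vanishing holomorphic s : U → ℂ, the function z ↦ 2·log ‖s(z)‖ − φ(z) is plurisubharmonic on U. -/
/-!
Plurisubharmonicity is tested on discs in complex lines, so everything reduces to one variable.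
On a circle, a continuous function is uniformly approximated by the real part of a polynomial `p`
(density of trigonometric polynomials). If `u` satisfies the sub-mean value inequality at the
centre and `f` is holomorphic, then `f · exp (p / 2)` with `re p ≈ u` is holomorphic with squared
norm close to `‖f‖² eᵘ` on the circle, and the mean value property of its square gives the
sub-mean value inequality for `‖f‖² eᵘ`. Conversely, for `s = exp (p / 2 ∘ ℓ)` with `re p ≈ φ`
and `ℓ` a linear coordinate along the line, `‖s‖² e^{-φ} ≈ 1` on the circle, so the sub-mean
value inequality for `‖s‖² e^{-φ}` at the centre gives back the one for `-φ`. Since `log ‖s‖` is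
harmonic for nonvanishing `s`, adding `2 log ‖s‖` preserves the sub-mean value inequality, and
`s = 1` gives the converse.
-/

open MeasureTheory

noncomputable section

/-- A function `u` is plurisubharmonic on `Ω ⊆ ℂⁿ` if it is upper semicontinuous on `Ω`
and satisfies the sub-mean value inequality on every complex line segment contained in `Ω`. -/
def Psh {n : ℕ} (Ω : Set (EuclideanSpace ℂ (Fin n))) (u : EuclideanSpace ℂ (Fin n) → ℝ) : Prop :=
  UpperSemicontinuousOn u Ω ∧
  ∀ a ∈ Ω, ∀ ξ : EuclideanSpace ℂ (Fin n), ∀ r : ℝ, 0 < r →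
    (∀ w : ℂ, ‖w‖ ≤ r → a + w • ξ ∈ Ω) →
    IntegrableOn (fun θ : ℝ => u (a + (((r : ℂ) * Complex.exp ((θ : ℂ) * Complex.I))) • ξ))
      (Set.Icc 0 (2 * Real.pi)) volume ∧
    u a ≤ (1 / (2 * Real.pi)) *
      ∫ θ in (0:ℝ)..(2 * Real.pi),
        u (a + (((r : ℂ) * Complex.exp ((θ : ℂ) * Complex.I))) • ξ)

open Complex Metric Polynomial Set Filter Topology
open scoped Real ComplexConjugate
open Real (circleAverage)

lemma re_mul_zpow_eq_re_mul_pow_natAbs {u : ℂ} (hu : ‖u‖ = 1) (c : ℂ) (k : ℤ) :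
    (c * u ^ k).re = ((if 0 ≤ k then c else conj c) * u ^ k.natAbs).re := by
  obtain ⟨m, rfl | rfl⟩ := Int.eq_nat_or_neg k
  · simp
  · rcases Nat.eq_zero_or_pos m with rfl | hm
    · simp
    have hu' : ‖u ^ m‖ = 1 := by simp [hu]
    simp only [zpow_neg, zpow_natCast, Int.natAbs_neg, Int.natAbs_natCast,
      inv_eq_conj hu', Left.nonneg_neg_iff, Int.natCast_nonpos_iff, hm.ne', if_false]
    rw [mul_re, mul_re, conj_re, conj_im, conj_re, conj_im]
    ring

lemma AddCircle.exists_polynomial_abs_re_sub_lt (V : C(AddCircle (2 * π), ℂ)) {ε : ℝ} (hε : 0 < ε) :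
    ∃ p : ℂ[X], ∀ x, |(V x).re - (p.eval (AddCircle.toCircle x : ℂ)).re| < ε := by
  have : Fact (0 < 2 * π) := ⟨Real.two_pi_pos⟩
  have hV : V ∈ closure (Submodule.span ℂ (range (fourier (T := 2 * π))) : Set _) := by
    rw [← Submodule.topologicalClosure_coe, span_fourier_closure_eq_top]; trivial
  obtain ⟨h, hh, hVh⟩ := Metric.mem_closure_iff.mp hV ε hε
  obtain ⟨c, rfl⟩ := Finsupp.mem_span_range_iff_exists_finsupp.mp hh
  refine ⟨∑ k ∈ c.support, C (if 0 ≤ k then c k else conj (c k)) * X ^ k.natAbs, fun x => ?_⟩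
  have hre : ((c.sum fun k a => a • fourier k) x).re
      = ((∑ k ∈ c.support, C (if 0 ≤ k then c k else conj (c k)) * X ^ k.natAbs).eval
          (AddCircle.toCircle x : ℂ)).re := by
    simp only [Finsupp.sum, ContinuousMap.coe_sum, Finset.sum_apply, ContinuousMap.coe_smul,
      Pi.smul_apply, fourier_apply, AddCircle.toCircle_zsmul, Circle.coe_zpow, smul_eq_mul,
      re_sum, eval_finsetSum, eval_mul, eval_C, eval_pow, eval_X]
    exact Finset.sum_congr rfl fun k _ =>
      re_mul_zpow_eq_re_mul_pow_natAbs (Circle.norm_coe _) (c k) k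
  rw [← hre, ← sub_re]
  calc _ ≤ ‖V x - (c.sum fun k a => a • fourier k) x‖ := abs_re_le_norm _
    _ ≤ dist V _ := by rw [← dist_eq]; exact ContinuousMap.dist_apply_le_dist x
    _ < ε := hVh

lemma exists_polynomial_abs_sub_re_lt_on_sphere {r : ℝ} (hr : 0 < r) {W : ℂ → ℝ}
    (hW : ContinuousOn W (sphere 0 r)) {ε : ℝ} (hε : 0 < ε) :
    ∃ p : ℂ[X], ∀ z ∈ sphere (0 : ℂ) r, |W z - (p.eval z).re| < ε := by
  have hmaps : ∀ x : AddCircle (2 * π), (r : ℂ) * AddCircle.toCircle x ∈ sphere (0 : ℂ) r := by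
    simp [abs_of_pos hr, Circle.norm_coe]
  let V : C(AddCircle (2 * π), ℂ) :=
    ⟨fun x => (W (r * AddCircle.toCircle x) : ℂ), continuous_ofReal.comp <|
      hW.comp_continuous (by fun_prop) hmaps⟩
  obtain ⟨p, hp⟩ := AddCircle.exists_polynomial_abs_re_sub_lt V hε
  refine ⟨p.comp (C (r : ℂ)⁻¹ * X), fun z hz => ?_⟩
  have hz : (r : ℂ) * AddCircle.toCircle (arg z : AddCircle (2 * π)) = z := by
    rw [mem_sphere_zero_iff_norm] at hz
    rw [AddCircle.toCircle_apply_mk, Circle.coe_exp, ← hz, div_self Real.two_pi_pos.ne', one_mul]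
    exact norm_mul_exp_arg_mul_I z
  have := hp (arg z)
  rw [← hz]
  simpa [V, eval_comp, hr.ne'] using this

lemma le_of_forall_pos_le_exp_mul {x y : ℝ} (h : ∀ δ > 0, x ≤ Real.exp δ * y) : x ≤ y := by
  have hlim : Tendsto (fun δ => Real.exp δ * y) (𝓝[>] 0) (𝓝 y) := by
    simpa using ((Real.continuous_exp.tendsto 0).mul_const y).mono_left nhdsWithin_le_nhds
  exact ge_of_tendsto hlim (eventually_nhdsWithin_of_forall h)

lemma norm_exp_div_two_sq (w : ℂ) : ‖Complex.exp (w / 2)‖ ^ 2 = Real.exp w.re := by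
  rw [norm_exp, ← Real.exp_nat_mul, div_ofNat_re]
  push_cast
  ring_nf

namespace Real

lemma norm_circleAverage_le {E : Type*} [NormedAddCommGroup E] [NormedSpace ℝ E]
    (f : ℂ → E) (c : ℂ) (R : ℝ) :
    ‖circleAverage f c R‖ ≤ circleAverage (fun z => ‖f z‖) c R := by
  rw [circleAverage_def, circleAverage_def, norm_smul, smul_eq_mul,
    Real.norm_of_nonneg (by positivity)]
  gcongr
  exact intervalIntegral.norm_integral_le_integral_norm Real.two_pi_pos.le

lemma abs_circleAverage_le_of_forall_abs_le {f : ℂ → ℝ} {c : ℂ} {R a : ℝ}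
    (hf : CircleIntegrable f c R) (h : ∀ z ∈ sphere c |R|, |f z| ≤ a) :
    |circleAverage f c R| ≤ a :=
  abs_circleAverage_le_circleAverage_abs.trans (circleAverage_mono_on_of_le_circle hf.abs h)

lemma circleAverage_const_mul (a : ℝ) (f : ℂ → ℝ) (c : ℂ) (R : ℝ) :
    circleAverage (fun z => a * f z) c R = a * circleAverage f c R :=
  circleAverage_fun_smul (a := a) (f := f)

end Real

section MeanValue

variable {E : Type*} [NormedAddCommGroup E] [NormedSpace ℂ E] [CompleteSpace E]
  {f : ℂ → E} {c : ℂ} {R : ℝ}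

lemma AnalyticOnNhd.circleAverage_eq (hf : AnalyticOnNhd ℂ f (closedBall c |R|)) :
    circleAverage f c R = f c :=
  (hf.differentiableOn.mono closure_ball_subset_closedBall).diffContOnCl.circleAverage

lemma AnalyticOnNhd.circleAverage_re_eq {g : ℂ → ℂ} (hg : AnalyticOnNhd ℂ g (closedBall c |R|)) :
    circleAverage (fun z => (g z).re) c R = (g c).re := by
  have hint : CircleIntegrable g c R :=
    (hg.continuousOn.mono sphere_subset_closedBall).circleIntegrable'
  rw [← hg.circleAverage_eq]
  exact reCLM.circleAverage_comp_comm hint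

end MeanValue

lemma abs_circleAverage_sub_re_eval_le {r : ℝ} (hr : 0 < r) {u : ℂ → ℝ}
    (hu : ContinuousOn u (sphere 0 r)) (p : ℂ[X]) {ε : ℝ}
    (h : ∀ z ∈ sphere (0 : ℂ) r, |u z - (p.eval z).re| ≤ ε) :
    |circleAverage u 0 r - (p.eval 0).re| ≤ ε := by
  have hpc : ContinuousOn (fun z => (p.eval z).re) (sphere 0 r) :=
    (continuous_re.comp p.continuous).continuousOn
  have hpa : AnalyticOnNhd ℂ (fun z => p.eval z) (closedBall 0 |r|) :=
    fun z _ => p.differentiable.analyticAt z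
  rw [← hpa.circleAverage_re_eq,
    ← Real.circleAverage_fun_sub (hu.circleIntegrable hr.le) (hpc.circleIntegrable hr.le)]
  exact Real.abs_circleAverage_le_of_forall_abs_le ((hu.sub hpc).circleIntegrable hr.le)
    (by rwa [abs_of_pos hr])

theorem norm_sq_mul_exp_le_circleAverage {r : ℝ} (hr : 0 < r) {f : ℂ → ℂ} {u : ℂ → ℝ}
    (hf : AnalyticOnNhd ℂ f (closedBall 0 r)) (hu : ContinuousOn u (sphere 0 r))
    (hu0 : u 0 ≤ circleAverage u 0 r) :
    ‖f 0‖ ^ 2 * Real.exp (u 0) ≤ circleAverage (fun z => ‖f z‖ ^ 2 * Real.exp (u z)) 0 r := by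
  refine le_of_forall_pos_le_exp_mul fun δ hδ => ?_
  obtain ⟨p, hp⟩ := exists_polynomial_abs_sub_re_lt_on_sphere hr hu (half_pos hδ)
  have hp0 := abs_le.mp (abs_circleAverage_sub_re_eval_le hr hu p fun z hz => (hp z hz).le)
  let G : ℂ → ℂ := fun z => f z * Complex.exp (p.eval z / 2)
  have hG : AnalyticOnNhd ℂ G (closedBall 0 r) :=
    hf.mul fun z _ => (p.differentiable.analyticAt z).div_const.cexp
  have hnormG : ∀ z, ‖G z‖ ^ 2 = Real.exp ((p.eval z).re) * ‖f z‖ ^ 2 := fun z => by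
    rw [norm_mul, mul_pow, norm_exp_div_two_sq, mul_comm]
  have hFc : ContinuousOn (fun z => ‖f z‖ ^ 2 * Real.exp (u z)) (sphere 0 r) :=
    ((hf.continuousOn.mono sphere_subset_closedBall).norm.pow 2).mul hu.rexp
  calc ‖f 0‖ ^ 2 * Real.exp (u 0)
      ≤ Real.exp (δ / 2) * ‖G 0‖ ^ 2 := by
        rw [hnormG, ← mul_assoc, ← Real.exp_add, mul_comm]
        gcongr; linarith
    _ = Real.exp (δ / 2) * ‖circleAverage (fun z => G z ^ 2) 0 r‖ := by
        rw [AnalyticOnNhd.circleAverage_eq (R := r) (by rw [abs_of_pos hr]; exact hG.pow 2),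
          norm_pow]
    _ ≤ Real.exp (δ / 2) * circleAverage (fun z => ‖G z‖ ^ 2) 0 r := by
        gcongr
        exact (Real.norm_circleAverage_le _ 0 r).trans_eq (by simp only [norm_pow])
    _ ≤ Real.exp (δ / 2) *
          circleAverage (fun z => Real.exp (δ / 2) * (‖f z‖ ^ 2 * Real.exp (u z))) 0 r := by
        gcongr 1
        refine Real.circleAverage_mono
          (((hG.continuousOn.mono sphere_subset_closedBall).norm.pow 2).circleIntegrable hr.le)
          ((hFc.const_smul (Real.exp (δ / 2))).circleIntegrable hr.le) fun z hz => ?_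
        have := abs_lt.mp (hp z (by rwa [abs_of_pos hr] at hz))
        rw [hnormG, mul_left_comm, ← Real.exp_add, mul_comm (Real.exp _)]
        gcongr; linarith
    _ = Real.exp δ * circleAverage (fun z => ‖f z‖ ^ 2 * Real.exp (u z)) 0 r := by
        rw [Real.circleAverage_const_mul, ← mul_assoc, ← Real.exp_add, add_halves]

theorem le_circleAverage_of_forall_norm_sq_exp_mul_exp {r : ℝ} (hr : 0 < r) {u : ℂ → ℝ}
    (hu : ContinuousOn u (sphere 0 r))
    (h : ∀ g : ℂ → ℂ, Differentiable ℂ g → ‖Complex.exp (g 0)‖ ^ 2 * Real.exp (u 0) ≤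
      circleAverage (fun z => ‖Complex.exp (g z)‖ ^ 2 * Real.exp (u z)) 0 r) :
    u 0 ≤ circleAverage u 0 r := by
  refine le_of_forall_pos_le_add fun δ hδ => ?_
  obtain ⟨p, hp⟩ := exists_polynomial_abs_sub_re_lt_on_sphere hr hu (half_pos hδ)
  have hp0 := abs_le.mp (abs_circleAverage_sub_re_eval_le hr hu p fun z hz => (hp z hz).le)
  have hat0 := h (fun z => -p.eval z / 2) (p.differentiable.neg.div_const 2)
  simp only [norm_exp_div_two_sq, neg_re, ← Real.exp_add] at hat0
  have hle : circleAverage (fun z => Real.exp (-(p.eval z).re + u z)) 0 r ≤ Real.exp (δ / 2) :=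
    Real.circleAverage_mono_on_of_le_circle
      ((((continuous_re.comp p.continuous).continuousOn.neg).add hu).rexp.circleIntegrable hr.le)
      fun z hz => by
        have := abs_lt.mp (hp z (by rwa [abs_of_pos hr] at hz))
        gcongr; linarith
  linarith [Real.exp_le_exp.mp (hat0.trans hle)]

theorem mul_log_norm_add_le_circleAverage {r : ℝ} (c : ℝ) {f : ℂ → ℂ} {u : ℂ → ℝ}
    (hf : AnalyticOnNhd ℂ f (closedBall 0 |r|)) (hf0 : ∀ z ∈ closedBall 0 |r|, f z ≠ 0)
    (hu : CircleIntegrable u 0 r) (hu0 : u 0 ≤ circleAverage u 0 r) :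
    c * Real.log ‖f 0‖ + u 0 ≤ circleAverage (fun z => c * Real.log ‖f z‖ + u z) 0 r := by
  have hlog : CircleIntegrable (fun z => Real.log ‖f z‖) 0 r :=
    ContinuousOn.circleIntegrable' <| ((hf.continuousOn.norm).log fun z hz =>
      norm_ne_zero_iff.mpr (hf0 z hz)).mono sphere_subset_closedBall
  have hclog : CircleIntegrable (fun z => c * Real.log ‖f z‖) 0 r := hlog.const_smul (a := c)
  rw [Real.circleAverage_fun_add hclog hu, Real.circleAverage_const_mul,
    hf.circleAverage_log_norm_of_ne_zero hf0]
  linarith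

section Psh

variable {n : ℕ} {Ω U : Set (EuclideanSpace ℂ (Fin n))} {φ : EuclideanSpace ℂ (Fin n) → ℝ}

theorem psh_iff_forall_le_circleAverage {u : EuclideanSpace ℂ (Fin n) → ℝ}
    (hu : ContinuousOn u Ω) :
    Psh Ω u ↔ ∀ a ∈ Ω, ∀ ξ : EuclideanSpace ℂ (Fin n), ∀ r : ℝ, 0 < r →
      (∀ w : ℂ, ‖w‖ ≤ r → a + w • ξ ∈ Ω) → u a ≤ circleAverage (fun w => u (a + w • ξ)) 0 r := by
  have hmean : ∀ a ξ (r : ℝ), (1 / (2 * π)) * ∫ θ in (0:ℝ)..(2 * π),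
      u (a + ((r : ℂ) * Complex.exp ((θ : ℂ) * Complex.I)) • ξ)
        = circleAverage (fun w => u (a + w • ξ)) 0 r := fun a ξ r => by
    simp [Real.circleAverage_def, circleMap_zero]
  refine ⟨fun h a ha ξ r hr hsub => hmean a ξ r ▸ (h.2 a ha ξ r hr hsub).2,
    fun h => ⟨hu.upperSemicontinuousOn, fun a ha ξ r hr hsub =>
      ⟨?_, (hmean a ξ r).symm ▸ h a ha ξ r hr hsub⟩⟩⟩
  refine (hu.comp_continuous (by fun_prop) fun θ => hsub _ ?_).continuousOn.integrableOn_Icc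
  simp [abs_of_pos hr]

lemma Psh.neg_le_circleAverage_line (hφ : ContinuousOn φ Ω) (hA : Psh Ω (fun z => -φ z))
    {a ξ : EuclideanSpace ℂ (Fin n)} {r : ℝ} (hr : 0 < r) (ha : a ∈ Ω)
    (hsub : ∀ w : ℂ, ‖w‖ ≤ r → a + w • ξ ∈ Ω) :
    -φ (a + (0 : ℂ) • ξ) ≤ circleAverage (fun w => -φ (a + w • ξ)) 0 r := by
  simpa only [zero_smul, add_zero] using
    (psh_iff_forall_le_circleAverage (u := fun z => -φ z) hφ.neg).mp hA a ha ξ r hr hsub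

theorem Psh.norm_sq_mul_exp_neg (hφ : ContinuousOn φ Ω) (hA : Psh Ω (fun z => -φ z))
    (hUΩ : U ⊆ Ω) {s : EuclideanSpace ℂ (Fin n) → ℂ} (hs : AnalyticOnNhd ℂ s U) :
    Psh U (fun z => ‖s z‖ ^ 2 * Real.exp (-φ z)) := by
  refine (psh_iff_forall_le_circleAverage ?_).mpr fun a ha ξ r hr hsub => ?_
  · exact (hs.continuousOn.norm.pow 2).mul (hφ.mono hUΩ).neg.rexp
  have hline : MapsTo (fun w : ℂ => a + w • ξ) (closedBall 0 r) U :=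
    fun w hw => hsub w (mem_closedBall_zero_iff.mp hw)
  simpa only [zero_smul, add_zero] using norm_sq_mul_exp_le_circleAverage hr
    (f := fun w => s (a + w • ξ)) (u := fun w => -φ (a + w • ξ))
    (hs.comp (fun _ _ => by fun_prop) hline)
    ((hφ.comp (by fun_prop) (hline.mono_right hUΩ)).neg.mono sphere_subset_closedBall)
    (hA.neg_le_circleAverage_line hφ hr (hUΩ ha) fun w hw => hUΩ (hsub w hw))

theorem Psh.two_mul_log_norm_sub (hφ : ContinuousOn φ Ω) (hA : Psh Ω (fun z => -φ z))
    (hUΩ : U ⊆ Ω) {s : EuclideanSpace ℂ (Fin n) → ℂ} (hs : AnalyticOnNhd ℂ s U)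
    (hs0 : ∀ z ∈ U, s z ≠ 0) :
    Psh U (fun z => 2 * Real.log ‖s z‖ - φ z) := by
  refine (psh_iff_forall_le_circleAverage ?_).mpr fun a ha ξ r hr hsub => ?_
  · exact (continuousOn_const.mul (hs.continuousOn.norm.log fun z hz =>
      norm_ne_zero_iff.mpr (hs0 z hz))).sub (hφ.mono hUΩ)
  have hline : MapsTo (fun w : ℂ => a + w • ξ) (closedBall 0 |r|) U :=
    fun w hw => hsub w (by simpa [abs_of_pos hr] using hw)
  simpa only [sub_eq_add_neg, zero_smul, add_zero] using mul_log_norm_add_le_circleAverage 2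
    (f := fun w => s (a + w • ξ)) (u := fun w => -φ (a + w • ξ))
    (hs.comp (fun _ _ => by fun_prop) hline)
    (fun w hw => hs0 _ (hline hw))
    ((hφ.comp (by fun_prop) (hline.mono_right hUΩ)).neg.mono
      sphere_subset_closedBall).circleIntegrable'
    (hA.neg_le_circleAverage_line hφ hr (hUΩ ha) fun w hw => hUΩ (hsub w hw))

theorem psh_neg_of_forall_psh_norm_sq_mul_exp_neg (hφ : ContinuousOn φ Ω)
    (hB : ∀ s : EuclideanSpace ℂ (Fin n) → ℂ, AnalyticOnNhd ℂ s Ω →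
      Psh Ω (fun z => ‖s z‖ ^ 2 * Real.exp (-φ z))) :
    Psh Ω (fun z => -φ z) := by
  refine (psh_iff_forall_le_circleAverage (u := fun z => -φ z) hφ.neg).mpr
    fun a ha ξ r hr hsub => ?_
  rcases eq_or_ne ξ 0 with rfl | hξ
  · simp [Real.circleAverage_const]
  obtain ⟨L, hL⟩ := SeparatingDual.exists_eq_one (R := ℂ) hξ
  have hLline : ∀ w : ℂ, L (a + w • ξ - a) = w := fun w => by simp [hL]
  have key := le_circleAverage_of_forall_norm_sq_exp_mul_exp hr (u := fun w => -φ (a + w • ξ))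
    ((hφ.comp (by fun_prop) fun w hw => hsub w (mem_sphere_zero_iff_norm.mp hw).le).neg)
    fun g hg => ?_
  · simpa only [zero_smul, add_zero] using key
  have hs : AnalyticOnNhd ℂ (fun z => Complex.exp (g (L (z - a)))) Ω := fun z _ =>
    ((hg.analyticAt _).comp ((L.analyticAt _).comp (analyticAt_id.sub analyticAt_const))).cexp
  have hpsh := (psh_iff_forall_le_circleAverage ?_).mp (hB _ hs) a ha ξ r hr hsub
  · simpa only [hLline, zero_smul, add_zero, sub_self, map_zero] using hpsh
  · exact (hs.continuousOn.norm.pow 2).mul hφ.neg.rexp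

end Psh

/-- For a continuous weight `φ`, the following are equivalent: `-φ` is psh;
`‖s‖² e^{-φ}` is psh on `U` for every holomorphic `s : U → ℂ` on every open `U ⊆ Ω`;
and `2 log ‖s‖ - φ` is psh on `U` for every nowhere-vanishing holomorphic `s` on `U`. -/
theorem psh_neg_weight_iff_sections {n : ℕ} (Ω : Set (EuclideanSpace ℂ (Fin n)))
    (hΩ : IsOpen Ω) (φ : EuclideanSpace ℂ (Fin n) → ℝ) (hφ : ContinuousOn φ Ω) :
    (Psh Ω (fun z => -φ z) ↔
      ∀ U : Set (EuclideanSpace ℂ (Fin n)), U ⊆ Ω → IsOpen U →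
        ∀ s : EuclideanSpace ℂ (Fin n) → ℂ, AnalyticOnNhd ℂ s U →
          Psh U (fun z => ‖s z‖ ^ 2 * Real.exp (-φ z))) ∧
    (Psh Ω (fun z => -φ z) ↔
      ∀ U : Set (EuclideanSpace ℂ (Fin n)), U ⊆ Ω → IsOpen U →
        ∀ s : EuclideanSpace ℂ (Fin n) → ℂ, AnalyticOnNhd ℂ s U → (∀ z ∈ U, s z ≠ 0) →
          Psh U (fun z => 2 * Real.log ‖s z‖ - φ z)) := by
  refine ⟨⟨fun hA U hUΩ _ s hs => hA.norm_sq_mul_exp_neg hφ hUΩ hs,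
      fun hB => psh_neg_of_forall_psh_norm_sq_mul_exp_neg hφ fun s hs => hB Ω le_rfl hΩ s hs⟩,
    ⟨fun hA U hUΩ _ s hs hs0 => hA.two_mul_log_norm_sub hφ hUΩ hs hs0, fun hC => ?_⟩⟩
  simpa using hC Ω le_rfl hΩ (fun _ => 1) analyticOnNhd_const fun _ _ => one_ne_zero
end
end

section
/- Let f : ℂ → ℂ be analytic at a point z₀ with analytic order m ∈ ℕ at z₀ (so f is not identically zero near z₀), and let α > 0 be a real number. Then there exists r > 0 such that z ↦ ‖f(z)‖^(−2α) is Lebesgue-integrable on the disc B(z₀, r) if and only if α · m < 1. -/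
/-!
Near `z₀` we have `f z = (z - z₀) ^ m • g z` with `g z₀ ≠ 0`, so `‖f z‖ ^ (-2α)` is `Θ` of
`‖z - z₀‖ ^ (-2αm)` at `𝓝 z₀`, and integrability on a small neighbourhood only depends on the
`Θ`-class of a function. Integrating radially, `∫ ‖x‖ ^ q dx` over a ball reduces to
`∫ ρ ^ (q + d - 1) dρ` over an interval, so in a real space of dimension `d` the function `‖x‖ ^ q` is
integrable near `0` iff `q > -d`; for `ℂ` this reads `-2αm > -2`.
-/

open MeasureTheory Set Filter Metric Topology Asymptotics

namespace MeasureTheory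

theorem integrableAtFilter_nhds_iff_exists_ball {X F : Type*} [PseudoMetricSpace X]
    [MeasurableSpace X] [NormedAddCommGroup F] {f : X → F} {x : X} {μ : Measure X} :
    IntegrableAtFilter f (𝓝 x) μ ↔ ∃ r > 0, IntegrableOn f (ball x r) μ :=
  ⟨fun ⟨_, hs, hf⟩ ↦ let ⟨r, hr, hsub⟩ := Metric.mem_nhds_iff.1 hs; ⟨r, hr, hf.mono_set hsub⟩,
    fun ⟨_, hr, hf⟩ ↦ ⟨_, ball_mem_nhds x hr, hf⟩⟩

section AddHaar

variable {E : Type*} [NormedAddCommGroup E] [NormedSpace ℝ E] [FiniteDimensional ℝ E]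
  [Nontrivial E] [MeasurableSpace E] [BorelSpace E] (μ : Measure E) [μ.IsAddHaarMeasure]

theorem integrableOn_ball_norm_rpow_iff {r : ℝ} (hr : 0 < r) (q : ℝ) :
    IntegrableOn (fun x : E ↦ ‖x‖ ^ q) (ball 0 r) μ ↔ -(Module.finrank ℝ E : ℝ) < q := by
  have hd : 1 ≤ Module.finrank ℝ E := Module.finrank_pos
  rw [integrableOn_fun_norm_addHaar μ (f := fun y ↦ y ^ q)]
  have hpow : EqOn (fun y : ℝ ↦ y ^ (Module.finrank ℝ E - 1) • y ^ q)
      (fun y ↦ y ^ (q + (Module.finrank ℝ E - 1 : ℕ))) (Ioo 0 r) := fun y hy ↦ by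
    dsimp only
    rw [smul_eq_mul, Real.rpow_add hy.1, Real.rpow_natCast, mul_comm]
  rw [integrableOn_congr_fun hpow measurableSet_Ioo,
    intervalIntegral.integrableOn_Ioo_rpow_iff hr, Nat.cast_sub hd, Nat.cast_one]
  constructor <;> intro h <;> linarith

theorem integrableAtFilter_nhds_norm_sub_rpow_iff (x : E) (q : ℝ) :
    IntegrableAtFilter (fun y ↦ ‖y - x‖ ^ q) (𝓝 x) μ ↔ -(Module.finrank ℝ E : ℝ) < q := by
  rw [← map_add_right_nhds_zero, ← map_add_right_eq_self μ x,
    (measurableEmbedding_addRight x).integrableAtFilter_map_iff]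
  simp only [Function.comp_def, add_sub_cancel_right]
  rw [integrableAtFilter_nhds_iff_exists_ball]
  exact ⟨fun ⟨r, hr, h⟩ ↦ (integrableOn_ball_norm_rpow_iff μ hr q).1 h,
    fun h ↦ ⟨1, one_pos, (integrableOn_ball_norm_rpow_iff μ one_pos q).2 h⟩⟩

end AddHaar

end MeasureTheory

theorem Asymptotics.IsTheta.integrableAtFilter_iff {α E F : Type*} [MeasurableSpace α]
    [NormedAddCommGroup E] [NormedAddCommGroup F] {f : α → E} {g : α → F} {l : Filter α}
    [l.IsMeasurablyGenerated] {μ : Measure α} (h : f =Θ[l] g)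
    (hf : StronglyMeasurableAtFilter f l μ) (hg : StronglyMeasurableAtFilter g l μ) :
    IntegrableAtFilter f l μ ↔ IntegrableAtFilter g l μ :=
  ⟨h.isBigO_symm.integrableAtFilter hg, h.isBigO.integrableAtFilter hf⟩

theorem Filter.Tendsto.isTheta_const {α E : Type*} [NormedAddCommGroup E] {l : Filter α}
    {f : α → E} {c : E} (h : Tendsto f l (𝓝 c)) (hc : c ≠ 0) : f =Θ[l] fun _ ↦ c :=
  ⟨isBigO_const_of_tendsto h hc, (isBigO_const_left_iff_pos_le_norm hc).2
    ⟨‖c‖ / 2, by positivity, h.norm.eventually (le_mem_nhds (half_lt_self (norm_pos_iff.2 hc)))⟩⟩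

section Analytic

variable {𝕜 E : Type*} [NontriviallyNormedField 𝕜] [NormedAddCommGroup E] [NormedSpace 𝕜 E]
  {f : 𝕜 → E} {z₀ : 𝕜}

theorem AnalyticAt.norm_isTheta_norm_sub_pow {m : ℕ} (hf : AnalyticAt 𝕜 f z₀)
    (hm : analyticOrderAt f z₀ = m) : (fun z ↦ ‖f z‖) =Θ[𝓝 z₀] fun z ↦ ‖z - z₀‖ ^ m := by
  obtain ⟨g, hg, hg₀, hfg⟩ := hf.analyticOrderAt_eq_natCast.1 hm
  have hnorm : (fun z ↦ ‖f z‖) =ᶠ[𝓝 z₀] fun z ↦ ‖g z‖ * ‖z - z₀‖ ^ m :=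
    hfg.mono fun z hz ↦ by simp only [hz, norm_smul, norm_pow, mul_comm]
  refine hnorm.trans_isTheta ((isTheta_const_mul_right (norm_ne_zero_iff.2 hg₀)).1 ?_)
  exact (hg.continuousAt.norm.tendsto.isTheta_const (norm_ne_zero_iff.2 hg₀)).mul isTheta_rfl

theorem AnalyticAt.stronglyMeasurableAtFilter [MeasurableSpace 𝕜] [OpensMeasurableSpace 𝕜]
    [SecondCountableTopologyEither 𝕜 E] (hf : AnalyticAt 𝕜 f z₀) (μ : Measure 𝕜) :
    StronglyMeasurableAtFilter f (𝓝 z₀) μ :=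
  let ⟨_, _, hp⟩ := hf
  hp.continuousOn.stronglyMeasurableAtFilter isOpen_eball z₀ (mem_eball_self hp.r_pos)

end Analytic

theorem integrable_abs_rpow_neg_iff_general (f : ℂ → ℂ) (z₀ : ℂ)
    (hf : AnalyticAt ℂ f z₀) (m : ℕ) (hm : analyticOrderAt f z₀ = m) (α : ℝ) :
    (∃ r > (0 : ℝ),
        IntegrableOn (fun z : ℂ => ‖f z‖ ^ (-(2 * α))) (Metric.ball z₀ r) volume) ↔
      α * m < 1 := by
  have hθ : (fun z ↦ ‖f z‖ ^ (-(2 * α))) =Θ[𝓝 z₀] fun z ↦ ‖z - z₀‖ ^ (m * -(2 * α)) := by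
    simp only [Real.rpow_natCast_mul (norm_nonneg _)]
    exact (hf.norm_isTheta_norm_sub_pow hm).rpow (.of_forall fun _ ↦ norm_nonneg _)
      (.of_forall fun _ ↦ by positivity)
  have hmeas : StronglyMeasurableAtFilter (fun z ↦ ‖f z‖ ^ (-(2 * α))) (𝓝 z₀) volume :=
    let ⟨s, hs, hfs⟩ := hf.stronglyMeasurableAtFilter volume
    ⟨s, hs, (hfs.aemeasurable.norm.pow_const _).aestronglyMeasurable⟩
  have hmeas_sub : Measurable fun z : ℂ ↦ ‖z - z₀‖ ^ (m * -(2 * α)) := by fun_prop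
  rw [← integrableAtFilter_nhds_iff_exists_ball,
    hθ.integrableAtFilter_iff hmeas hmeas_sub.aestronglyMeasurable.stronglyMeasurableAtFilter,
    integrableAtFilter_nhds_norm_sub_rpow_iff, Complex.finrank_real_complex, Nat.cast_ofNat]
  constructor <;> intro h <;> linarith

/-- For `f` analytic at `z₀` with finite vanishing order `m` and `α > 0`, the weight
`‖f‖^(-2α)` is integrable on some small disc around `z₀` iff `α · m < 1`. -/
theorem integrable_abs_rpow_neg_iff (f : ℂ → ℂ) (z₀ : ℂ)
    (hf : AnalyticAt ℂ f z₀) (m : ℕ) (hm : analyticOrderAt f z₀ = m) (α : ℝ) (hα : 0 < α) :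
    (∃ r > (0 : ℝ),
        IntegrableOn (fun z : ℂ => ‖f z‖ ^ (-(2 * α))) (Metric.ball z₀ r) volume) ↔
      α * m < 1 :=
  integrable_abs_rpow_neg_iff_general f z₀ hf m hm α
end
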